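/- arXiv:1002.2633 — 2 statements merged into one kernel-verified Lean document; each statement's English description precedes it below -/
import Mathlib

section
/- Let Z be a metric space and T : Lip_bs(Z) × Lip_loc(Z)^m → ℝ a multilinear function such that for every bounded open set U ⊂ Z and every ε > 0 there is a compact set C ⊂ U with M_{U∖C}(T) < ε. Then the set function ‖T‖(A) := inf{ M_V(T) : V open, A ⊂ V } is a Borel regular outer measure on Z. -/
/-!
For open sets the mass is countably subadditive. Given a test family in `⋃ Vᵢ`, shrink to a
bounded open `U` containing its supports and take a compact `C ⊆ U` with `M_{U \ C}(T) < ε`;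
cover `C` by compact pieces `Kᵢ ⊆ Vᵢ`, `i ∈ t` finite. For compact `K ⊆ V` a Lipschitz cutoff
`φ` with `tsupport φ ⊆ V` and `φ = 1` near `K` splits every test function as
`f = φ f + (1 - φ) f`, whence `M_U ≤ M_V + M_{U \ K}`; iterating over the pieces gives
`M_U ≤ ∑ M_{Vᵢ} + ε`. Masses of disjoint open sets add, so `‖T‖` is a metric outer measure and
Borel sets are Carathéodory measurable; a `G_δ` intersection of nearly optimal open
neighbourhoods of `A` has the same `‖T‖`-measure as `A`.
-/

open Metric Filter MeasureTheory ENNReal Bornology Topology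

variable {Z : Type*} [MetricSpace Z]

/-- Bounded-support Lipschitz real functions. -/
def LipBS {Z : Type*} [MetricSpace Z] (f : Z → ℝ) : Prop :=
  (∃ K : NNReal, LipschitzWith K f) ∧ IsBounded (tsupport f)

/-- Functions Lipschitz on bounded subsets. -/
def LipLoc {Z : Type*} [MetricSpace Z] (f : Z → ℝ) : Prop :=
  ∀ s : Set Z, IsBounded s → ∃ K : NNReal, LipschitzOnWith K f s

/-- Multilinearity of a functional on `Lip_bs(Z) × Lip_loc(Z)^m`. -/
def IsMultilinearFunctional {Z : Type*} [MetricSpace Z] {m : ℕ}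
    (T : (Z → ℝ) → (Fin m → Z → ℝ) → ℝ) : Prop :=
  (∀ f g π, LipBS f → LipBS g → (∀ i, LipLoc (π i)) →
      T (f + g) π = T f π + T g π) ∧
  (∀ (c : ℝ) f π, LipBS f → (∀ i, LipLoc (π i)) → T (c • f) π = c * T f π) ∧
  (∀ f π (i : Fin m) (g g' : Z → ℝ), LipBS f → (∀ j, LipLoc (π j)) → LipLoc g → LipLoc g' →
      T f (Function.update π i (g + g')) =
        T f (Function.update π i g) + T f (Function.update π i g')) ∧
  (∀ f π (i : Fin m) (c : ℝ) (g : Z → ℝ), LipBS f → (∀ j, LipLoc (π j)) → LipLoc g →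
      T f (Function.update π i (c • g)) = c * T f (Function.update π i g))

/-- Metric functional: multilinear, continuous and local (Definition 2.1). -/
def IsMetricFunctional {Z : Type*} [MetricSpace Z] {m : ℕ}
    (T : (Z → ℝ) → (Fin m → Z → ℝ) → ℝ) : Prop :=
  IsMultilinearFunctional T ∧
  (∀ f (π : Fin m → Z → ℝ) (πj : ℕ → Fin m → Z → ℝ),
      LipBS f → (∀ i, LipLoc (π i)) → (∀ j i, LipLoc (πj j i)) →
      (∀ i z, Tendsto (fun j => πj j i z) atTop (𝓝 (π i z))) →
      (∀ s : Set Z, IsBounded s → ∃ K : NNReal, ∀ i j, LipschitzOnWith K (πj j i) s) →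
      Tendsto (fun j => T f (πj j)) atTop (𝓝 (T f π))) ∧
  (∀ f π, LipBS f → (∀ i, LipLoc (π i)) →
      (∃ i : Fin m, ∃ δ : ℝ, 0 < δ ∧ ∀ z w : Z,
        infDist z (tsupport f) ≤ δ → infDist w (tsupport f) ≤ δ → π i z = π i w) →
      T f π = 0)

/-- The mass of `T` in a set `V`. -/
noncomputable def massIn {Z : Type*} [MetricSpace Z] {m : ℕ}
    (T : (Z → ℝ) → (Fin m → Z → ℝ) → ℝ) (V : Set Z) : ℝ≥0∞ :=
  ⨆ p : {q : (n : ℕ) × (Fin n → (Z → ℝ) × (Fin m → Z → ℝ)) //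
      (∀ i, LipBS (q.2 i).1 ∧ tsupport (q.2 i).1 ⊆ V ∧
        ∀ k, LipschitzWith 1 ((q.2 i).2 k)) ∧
      (∀ z, (∑ i : Fin q.1, |(q.2 i).1 z|) ≤ 1)},
    ENNReal.ofReal (∑ i : Fin p.1.1, T ((p.1.2 i).1) ((p.1.2 i).2))

/-- The outer measure `‖T‖`. -/
noncomputable def normT {Z : Type*} [MetricSpace Z] {m : ℕ}
    (T : (Z → ℝ) → (Fin m → Z → ℝ) → ℝ) (A : Set Z) : ℝ≥0∞ :=
  ⨅ (V : Set Z) (_ : IsOpen V ∧ A ⊆ V), massIn T V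

/-- Finite mass on bounded sets, concentrated near compact sets
(membership condition for `M_{m,loc}(Z)`). -/
def MlocCond {Z : Type*} [MetricSpace Z] {m : ℕ}
    (T : (Z → ℝ) → (Fin m → Z → ℝ) → ℝ) : Prop :=
  ∀ U : Set Z, IsOpen U → IsBounded U → ∀ ε : ℝ, 0 < ε →
    ∃ C : Set Z, IsCompact C ∧ C ⊆ U ∧ massIn T U < ⊤ ∧
      massIn T (U \ C) < ENNReal.ofReal ε

theorem LipschitzWith.mul_of_abs_le {α : Type*} [PseudoMetricSpace α] {f g : α → ℝ}
    {Kf Kg Mf Mg : NNReal} (hf : LipschitzWith Kf f) (hg : LipschitzWith Kg g)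
    (hfM : ∀ x, |f x| ≤ Mf) (hgM : ∀ x, |g x| ≤ Mg) :
    LipschitzWith (Mf * Kg + Mg * Kf) (f * g) := by
  refine LipschitzWith.of_dist_le_mul fun x y => ?_
  have hfxy := hf.dist_le_mul x y
  have hgxy := hg.dist_le_mul x y
  rw [Real.dist_eq] at hfxy hgxy ⊢
  calc |(f * g) x - (f * g) y| = |f x * (g x - g y) + g y * (f x - f y)| := by
        simp only [Pi.mul_apply]; ring_nf
    _ ≤ |f x| * |g x - g y| + |g y| * |f x - f y| := by
        rw [← abs_mul, ← abs_mul]; exact abs_add_le _ _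
    _ ≤ Mf * (Kg * dist x y) + Mg * (Kf * dist x y) := by
        gcongr
        exacts [hfM x, hgM y]
    _ = ↑(Mf * Kg + Mg * Kf) * dist x y := by push_cast; ring

theorem IsCompact.exists_lipschitz_cutoff {α : Type*} [PseudoMetricSpace α] {K V : Set α}
    (hK : IsCompact K) (hV : IsOpen V) (hKV : K ⊆ V) :
    ∃ (φ : α → ℝ) (L : NNReal), LipschitzWith L φ ∧ (∀ z, 0 ≤ φ z ∧ φ z ≤ 1) ∧
      tsupport φ ⊆ V ∧ Disjoint (tsupport (1 - φ)) K := by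
  obtain ⟨δ, hδ, hδV⟩ := hK.exists_cthickening_subset_open hV hKV
  have hδ2 : 0 < δ / 2 := half_pos hδ
  set ind := thickenedIndicator hδ2 (thickening (δ / 2) K)
  refine ⟨fun z => ind z, _, (LipschitzWith.subtype_val _).comp
    (lipschitzWith_thickenedIndicator hδ2 _), fun z => ⟨(ind z).2, ?_⟩, ?_, ?_⟩
  · exact_mod_cast thickenedIndicator_le_one hδ2 _ z
  · refine (closure_minimal (fun z hz => ?_) isClosed_cthickening).trans hδV
    by_contra hzδ
    have : z ∉ thickening (δ / 2) (thickening (δ / 2) K) := fun h =>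
      hzδ (thickening_subset_cthickening _ _ (by simpa using thickening_thickening_subset _ _ K h))
    apply Function.mem_support.1 hz
    rw [thickenedIndicator_zero hδ2 _ this, NNReal.coe_zero]
  · refine Set.disjoint_of_subset_right (self_subset_thickening hδ2 K)
      (Set.subset_compl_iff_disjoint_right.1
        (closure_minimal (fun z hz hzK => ?_) isOpen_thickening.isClosed_compl))
    apply Function.mem_support.1 hz
    change 1 - ((ind z : NNReal) : ℝ) = 0
    rw [thickenedIndicator_one hδ2 _ hzK, NNReal.coe_one, sub_self]

theorem lipBS_zero : LipBS (0 : Z → ℝ) :=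
  ⟨⟨0, LipschitzWith.const 0⟩, by simp⟩

theorem LipschitzWith.lipLoc {f : Z → ℝ} {K : NNReal} (hf : LipschitzWith K f) : LipLoc f :=
  fun _ _ => ⟨K, hf.lipschitzOnWith⟩

theorem LipBS.exists_abs_le {f : Z → ℝ} (hf : LipBS f) : ∃ M : NNReal, ∀ z, |f z| ≤ M := by
  obtain ⟨⟨K, hK⟩, hb⟩ := hf
  have hrange : Set.range f ⊆ insert 0 (f '' tsupport f) := by
    rintro _ ⟨z, rfl⟩
    by_cases hz : f z = 0
    · exact Or.inl hz
    · exact Or.inr ⟨z, subset_tsupport f hz, rfl⟩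
  obtain ⟨C, hC⟩ :=
    isBounded_iff_forall_norm_le.1 (((hK.isBounded_image hb).insert 0).subset hrange)
  exact ⟨C.toNNReal, fun z => (hC _ ⟨z, rfl⟩).trans (Real.le_coe_toNNReal C)⟩

theorem LipBS.mul_left {φ f : Z → ℝ} {L M : NNReal} (hφ : LipschitzWith L φ)
    (hφM : ∀ z, |φ z| ≤ M) (hf : LipBS f) : LipBS (φ * f) := by
  obtain ⟨Mf, hMf⟩ := hf.exists_abs_le
  obtain ⟨⟨K, hK⟩, hb⟩ := hf
  exact ⟨⟨_, hφ.mul_of_abs_le hK hφM hMf⟩, hb.subset tsupport_mul_subset_right⟩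

theorem IsMultilinearFunctional.map_zero_left {m : ℕ} {T : (Z → ℝ) → (Fin m → Z → ℝ) → ℝ}
    (hmul : IsMultilinearFunctional T) {π : Fin m → Z → ℝ} (hπ : ∀ k, LipLoc (π k)) :
    T 0 π = 0 := by
  simpa using hmul.1 0 0 π lipBS_zero lipBS_zero hπ

theorem ENNReal.ofReal_add_ofReal_le {a b : ℝ} {c : ℝ≥0∞} (hab : ENNReal.ofReal (a + b) ≤ c)
    (ha : ENNReal.ofReal a ≤ c) (hb : ENNReal.ofReal b ≤ c) :
    ENNReal.ofReal a + ENNReal.ofReal b ≤ c := by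
  rcases lt_or_ge a 0 with ha0 | ha0
  · simpa [ENNReal.ofReal_of_nonpos ha0.le] using hb
  rcases lt_or_ge b 0 with hb0 | hb0
  · simpa [ENNReal.ofReal_of_nonpos hb0.le] using ha
  rwa [← ENNReal.ofReal_add ha0 hb0]

section MassTestFamily

variable {m : ℕ} {T : (Z → ℝ) → (Fin m → Z → ℝ) → ℝ}

-- Reducible, so that the `Nonempty` instance below applies to the index type in `massIn`.
abbrev IsMassTestFamily (V : Set Z) {n : ℕ} (q : Fin n → (Z → ℝ) × (Fin m → Z → ℝ)) : Prop :=
  (∀ i, LipBS (q i).1 ∧ tsupport (q i).1 ⊆ V ∧ ∀ k, LipschitzWith 1 ((q i).2 k)) ∧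
    ∀ z, ∑ i, |(q i).1 z| ≤ 1

instance (V : Set Z) :
    Nonempty {q : (n : ℕ) × (Fin n → (Z → ℝ) × (Fin m → Z → ℝ)) // IsMassTestFamily V q.2} :=
  ⟨⟨⟨0, Fin.elim0⟩, fun i => i.elim0, fun z => by simp⟩⟩

theorem ofReal_sum_le_massIn {V : Set Z} {n : ℕ} {q : Fin n → (Z → ℝ) × (Fin m → Z → ℝ)}
    (hq : IsMassTestFamily V q) : ENNReal.ofReal (∑ i, T (q i).1 (q i).2) ≤ massIn T V :=
  le_iSup_of_le ⟨⟨n, q⟩, hq⟩ le_rfl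

theorem massIn_le {V : Set Z} {a : ℝ≥0∞}
    (h : ∀ (n : ℕ) (q : Fin n → (Z → ℝ) × (Fin m → Z → ℝ)),
      IsMassTestFamily V q → ENNReal.ofReal (∑ i, T (q i).1 (q i).2) ≤ a) :
    massIn T V ≤ a :=
  iSup_le fun ⟨⟨n, q⟩, hq⟩ => h n q hq

theorem IsMassTestFamily.mono {V W : Set Z} {n : ℕ} {q : Fin n → (Z → ℝ) × (Fin m → Z → ℝ)}
    (hq : IsMassTestFamily V q) (hVW : V ⊆ W) : IsMassTestFamily W q :=
  ⟨fun i => ⟨(hq.1 i).1, (hq.1 i).2.1.trans hVW, (hq.1 i).2.2⟩, hq.2⟩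

theorem IsMassTestFamily.mul_left {V : Set Z} {n : ℕ} {q : Fin n → (Z → ℝ) × (Fin m → Z → ℝ)}
    (hq : IsMassTestFamily V q) {φ : Z → ℝ} {L : NNReal} (hφ : LipschitzWith L φ)
    (hφ01 : ∀ z, 0 ≤ φ z ∧ φ z ≤ 1) :
    IsMassTestFamily (V ∩ tsupport φ) fun i => (φ * (q i).1, (q i).2) := by
  have habs : ∀ z, |φ z| ≤ (1 : NNReal) := fun z => by
    simpa [abs_of_nonneg (hφ01 z).1] using (hφ01 z).2
  refine ⟨fun i => ⟨(hq.1 i).1.mul_left hφ habs, Set.subset_inter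
    (tsupport_mul_subset_right.trans (hq.1 i).2.1) tsupport_mul_subset_left, (hq.1 i).2.2⟩,
    fun z => ?_⟩
  calc ∑ i, |(φ * (q i).1) z| = φ z * ∑ i, |(q i).1 z| := by
        simp only [Pi.mul_apply, abs_mul, abs_of_nonneg (hφ01 z).1, Finset.mul_sum]
    _ ≤ 1 := mul_le_one₀ (hφ01 z).2 (Finset.sum_nonneg fun _ _ => abs_nonneg _) (hq.2 z)

theorem IsMassTestFamily.append {V₁ V₂ : Set Z} {n₁ n₂ : ℕ}
    {q₁ : Fin n₁ → (Z → ℝ) × (Fin m → Z → ℝ)} {q₂ : Fin n₂ → (Z → ℝ) × (Fin m → Z → ℝ)}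
    (h₁ : IsMassTestFamily V₁ q₁) (h₂ : IsMassTestFamily V₂ q₂) (hd : Disjoint V₁ V₂) :
    IsMassTestFamily (V₁ ∪ V₂) (Fin.append q₁ q₂) := by
  have hzero : ∀ {V : Set Z} {f : Z → ℝ} {z : Z}, tsupport f ⊆ V → z ∉ V → f z = 0 :=
    fun hfV hz => Function.notMem_support.1 fun h => hz (hfV (subset_tsupport _ h))
  refine ⟨fun i => ?_, fun z => ?_⟩
  · induction i using Fin.addCases with
    | left i => simpa using (h₁.mono Set.subset_union_left).1 i
    | right i => simpa using (h₂.mono Set.subset_union_right).1 i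
  rw [Fin.sum_univ_add]
  simp only [Fin.append_left, Fin.append_right]
  by_cases hz : z ∈ V₁
  · simpa [hzero (h₂.1 _).2.1 (Set.disjoint_left.1 hd hz)] using h₁.2 z
  · simpa [hzero (h₁.1 _).2.1 hz] using h₂.2 z

theorem IsMassTestFamily.exists_isBounded {V : Set Z} {n : ℕ}
    {q : Fin n → (Z → ℝ) × (Fin m → Z → ℝ)} (hq : IsMassTestFamily V q) (hV : IsOpen V) :
    ∃ U, IsOpen U ∧ IsBounded U ∧ U ⊆ V ∧ IsMassTestFamily U q := by
  set S := ⋃ i, tsupport (q i).1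
  have hS : IsBounded S := isBounded_iUnion.2 fun i => (hq.1 i).1.2
  refine ⟨V ∩ thickening 1 S, hV.inter isOpen_thickening,
    hS.thickening.subset Set.inter_subset_right, Set.inter_subset_left,
    ⟨fun i => ⟨(hq.1 i).1, fun z hz => ⟨(hq.1 i).2.1 hz, ?_⟩, (hq.1 i).2.2⟩, hq.2⟩⟩
  exact self_subset_thickening one_pos S (Set.mem_iUnion_of_mem i hz)

end MassTestFamily

section MassIn

variable {m : ℕ} {T : (Z → ℝ) → (Fin m → Z → ℝ) → ℝ}

theorem massIn_mono {V W : Set Z} (hVW : V ⊆ W) : massIn T V ≤ massIn T W :=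
  massIn_le fun _ _ hq => ofReal_sum_le_massIn (hq.mono hVW)

theorem massIn_empty (hmul : IsMultilinearFunctional T) : massIn T (∅ : Set Z) = 0 := by
  refine le_antisymm (massIn_le fun n q hq => ?_) bot_le
  have hT : ∀ i, T (q i).1 (q i).2 = 0 := fun i => by
    rw [tsupport_eq_empty_iff.1 (Set.subset_empty_iff.1 (hq.1 i).2.1)]
    exact hmul.map_zero_left fun k => ((hq.1 i).2.2 k).lipLoc
  simp [hT]

theorem massIn_add_massIn_le_of_disjoint {V₁ V₂ : Set Z} (hd : Disjoint V₁ V₂) :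
    massIn T V₁ + massIn T V₂ ≤ massIn T (V₁ ∪ V₂) := by
  refine ENNReal.iSup_add_iSup_le fun ⟨⟨n₁, q₁⟩, (h₁ : IsMassTestFamily V₁ q₁)⟩
    ⟨⟨n₂, q₂⟩, (h₂ : IsMassTestFamily V₂ q₂)⟩ => ?_
  refine ENNReal.ofReal_add_ofReal_le ?_ (ofReal_sum_le_massIn (h₁.mono Set.subset_union_left))
    (ofReal_sum_le_massIn (h₂.mono Set.subset_union_right))
  convert ofReal_sum_le_massIn (T := T) (h₁.append h₂ hd) using 2
  simp [Fin.sum_univ_add]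

theorem massIn_le_massIn_add_massIn_diff (hmul : IsMultilinearFunctional T) {U V K : Set Z}
    (hK : IsCompact K) (hV : IsOpen V) (hKV : K ⊆ V) :
    massIn T U ≤ massIn T V + massIn T (U \ K) := by
  obtain ⟨φ, L, hφ, hφ01, hφV, hφK⟩ := hK.exists_lipschitz_cutoff hV hKV
  have hψ : LipschitzWith (0 + L) (1 - φ) := (LipschitzWith.const 1).sub hφ
  have hψ01 : ∀ z, 0 ≤ (1 - φ) z ∧ (1 - φ) z ≤ 1 := fun z => by
    simp only [Pi.sub_apply, Pi.one_apply]; constructor <;> linarith [hφ01 z]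
  refine massIn_le fun n q hq => ?_
  have hsplit : ∀ i, T (q i).1 (q i).2 = T (φ * (q i).1) (q i).2 + T ((1 - φ) * (q i).1) (q i).2 :=
    fun i => by
      rw [← hmul.1 _ _ _ ((hq.mul_left hφ hφ01).1 i).1 ((hq.mul_left hψ hψ01).1 i).1
        fun k => ((hq.1 i).2.2 k).lipLoc, ← add_mul, add_sub_cancel, one_mul]
  calc ENNReal.ofReal (∑ i, T (q i).1 (q i).2)
      = ENNReal.ofReal ((∑ i, T (φ * (q i).1) (q i).2) + ∑ i, T ((1 - φ) * (q i).1) (q i).2) := by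
        rw [← Finset.sum_add_distrib, Finset.sum_congr rfl fun i _ => hsplit i]
    _ ≤ ENNReal.ofReal (∑ i, T (φ * (q i).1) (q i).2) +
          ENNReal.ofReal (∑ i, T ((1 - φ) * (q i).1) (q i).2) := ENNReal.ofReal_add_le
    _ ≤ massIn T V + massIn T (U \ K) := by
        gcongr
        · exact ofReal_sum_le_massIn ((hq.mul_left hφ hφ01).mono
            (Set.inter_subset_right.trans hφV))
        · refine ofReal_sum_le_massIn ((hq.mul_left hψ hψ01).mono fun z hz => ?_)
          exact ⟨hz.1, Set.disjoint_left.1 hφK hz.2⟩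

theorem massIn_le_sum_add_massIn_diff (hmul : IsMultilinearFunctional T) {ι : Type*}
    (s : Finset ι) (U : Set Z) {K V : ι → Set Z} (hK : ∀ i, IsCompact (K i))
    (hV : ∀ i, IsOpen (V i)) (hKV : ∀ i, K i ⊆ V i) :
    massIn T U ≤ ∑ i ∈ s, massIn T (V i) + massIn T (U \ ⋃ i ∈ s, K i) := by
  classical
  induction s using Finset.induction_on with
  | empty => simp
  | insert a s ha ih =>
    calc massIn T U ≤ ∑ i ∈ s, massIn T (V i) + massIn T (U \ ⋃ i ∈ s, K i) := ih
      _ ≤ ∑ i ∈ s, massIn T (V i) + (massIn T (V a) + massIn T ((U \ ⋃ i ∈ s, K i) \ K a)) := by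
        gcongr
        exact massIn_le_massIn_add_massIn_diff hmul (hK a) (hV a) (hKV a)
      _ = ∑ i ∈ insert a s, massIn T (V i) + massIn T (U \ ⋃ i ∈ insert a s, K i) := by
        rw [Finset.sum_insert ha, Finset.set_biUnion_insert, Set.sdiff_sdiff, Set.union_comm]
        ring

def HasCompactlyConcentratedMass (T : (Z → ℝ) → (Fin m → Z → ℝ) → ℝ) : Prop :=
  ∀ U : Set Z, IsOpen U → IsBounded U → ∀ ε : ℝ, 0 < ε →
    ∃ C : Set Z, IsCompact C ∧ C ⊆ U ∧ massIn T (U \ C) < ENNReal.ofReal ε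

theorem massIn_iUnion_le (hmul : IsMultilinearFunctional T)
    (hcpt : HasCompactlyConcentratedMass T)
    {ι : Type*} {V : ι → Set Z} (hV : ∀ i, IsOpen (V i)) :
    massIn T (⋃ i, V i) ≤ ∑' i, massIn T (V i) := by
  refine massIn_le fun n q hq => ENNReal.le_of_forall_pos_le_add fun ε hε _ => ?_
  obtain ⟨U, hUo, hUb, hUV, hqU⟩ := hq.exists_isBounded (isOpen_iUnion hV)
  obtain ⟨C, hC, hCU, hCε⟩ := hcpt U hUo hUb ε hε
  obtain ⟨t, ht⟩ := hC.elim_finite_subcover V hV (hCU.trans hUV)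
  obtain ⟨K, hK, hKV, rfl⟩ := hC.finite_compact_cover t V (fun i _ => hV i) ht
  calc ENNReal.ofReal (∑ i, T (q i).1 (q i).2)
      ≤ massIn T U := ofReal_sum_le_massIn hqU
    _ ≤ ∑ i ∈ t, massIn T (V i) + massIn T (U \ ⋃ i ∈ t, K i) :=
        massIn_le_sum_add_massIn_diff hmul t U hK hV hKV
    _ ≤ ∑' i, massIn T (V i) + ε := by
        gcongr
        · exact ENNReal.sum_le_tsum t
        · simpa using hCε.le

end MassIn

theorem Metric.AreSeparated.exists_disjoint_thickening {α : Type*} [PseudoMetricSpace α]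
    {s t : Set α} (h : AreSeparated s t) :
    ∃ δ, 0 < δ ∧ Disjoint (thickening δ s) (thickening δ t) := by
  obtain ⟨r, hr0, hr⟩ := h
  obtain ⟨ε, hε0, hεr⟩ := ENNReal.lt_iff_exists_nnreal_btwn.1 (pos_iff_ne_zero.2 hr0)
  refine ⟨ε / 2, half_pos (by exact_mod_cast hε0), Set.disjoint_left.2 fun z hzs hzt => ?_⟩
  obtain ⟨x, hx, hxz⟩ := mem_thickening_iff.1 hzs
  obtain ⟨y, hy, hyz⟩ := mem_thickening_iff.1 hzt
  have hxy : dist x y < ε := by linarith [dist_triangle x z y, dist_comm x z]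
  exact (hr x hx y hy).not_gt ((edist_lt_coe.2 (dist_lt_coe.1 hxy)).trans hεr)

section NormT

variable {m : ℕ} {T : (Z → ℝ) → (Fin m → Z → ℝ) → ℝ}

theorem normT_le_massIn {A V : Set Z} (hV : IsOpen V) (hAV : A ⊆ V) :
    normT T A ≤ massIn T V :=
  iInf₂_le V ⟨hV, hAV⟩

theorem normT_mono {A B : Set Z} (hAB : A ⊆ B) : normT T A ≤ normT T B :=
  le_iInf₂ fun _ hV => normT_le_massIn hV.1 (hAB.trans hV.2)

theorem normT_empty (hmul : IsMultilinearFunctional T) : normT T (∅ : Set Z) = 0 :=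
  nonpos_iff_eq_zero.1 <| (normT_le_massIn isOpen_empty le_rfl).trans (massIn_empty hmul).le

theorem exists_isOpen_massIn_le_normT_add (A : Set Z) {δ : ℝ≥0∞} (hδ : δ ≠ 0) :
    ∃ V, IsOpen V ∧ A ⊆ V ∧ massIn T V ≤ normT T A + δ := by
  by_cases hA : normT T A = ⊤
  · exact ⟨Set.univ, isOpen_univ, Set.subset_univ A, by simp [hA]⟩
  have hlt : normT T A < normT T A + δ := ENNReal.lt_add_right hA hδ
  simp only [normT, iInf_lt_iff] at hlt
  obtain ⟨V, ⟨hV, hAV⟩, hVlt⟩ := hlt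
  exact ⟨V, hV, hAV, hVlt.le⟩

theorem normT_iUnion_le (hmul : IsMultilinearFunctional T)
    (hcpt : HasCompactlyConcentratedMass T)
    {ι : Type*} [Countable ι] (A : ι → Set Z) :
    normT T (⋃ i, A i) ≤ ∑' i, normT T (A i) := by
  refine ENNReal.le_of_forall_pos_le_add fun ε hε _ => ?_
  obtain ⟨δ, hδ0, hδε⟩ := ENNReal.exists_pos_sum_of_countable (ENNReal.coe_ne_zero.2 hε.ne') ι
  choose V hV hAV hVA using fun i =>
    exists_isOpen_massIn_le_normT_add (T := T) (A i) (ENNReal.coe_ne_zero.2 (hδ0 i).ne')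
  calc normT T (⋃ i, A i)
      ≤ massIn T (⋃ i, V i) := normT_le_massIn (isOpen_iUnion hV) (Set.iUnion_mono hAV)
    _ ≤ ∑' i, massIn T (V i) := massIn_iUnion_le hmul hcpt hV
    _ ≤ ∑' i, (normT T (A i) + δ i) := ENNReal.tsum_le_tsum hVA
    _ = ∑' i, normT T (A i) + ∑' i, (δ i : ℝ≥0∞) := ENNReal.tsum_add
    _ ≤ ∑' i, normT T (A i) + ε := by gcongr

theorem normT_add_normT_le_of_areSeparated {A B : Set Z} (hAB : AreSeparated A B) :
    normT T A + normT T B ≤ normT T (A ∪ B) := by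
  obtain ⟨δ, hδ0, hδ⟩ := hAB.exists_disjoint_thickening
  refine le_iInf₂ fun V ⟨hV, hABV⟩ => ?_
  calc normT T A + normT T B
      ≤ massIn T (V ∩ thickening δ A) + massIn T (V ∩ thickening δ B) := by
        gcongr
        · exact normT_le_massIn (hV.inter isOpen_thickening)
            (Set.subset_inter (Set.subset_union_left.trans hABV) (self_subset_thickening hδ0 A))
        · exact normT_le_massIn (hV.inter isOpen_thickening)
            (Set.subset_inter (Set.subset_union_right.trans hABV) (self_subset_thickening hδ0 B))
    _ ≤ massIn T ((V ∩ thickening δ A) ∪ (V ∩ thickening δ B)) :=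
        massIn_add_massIn_le_of_disjoint
          (hδ.mono Set.inter_subset_right Set.inter_subset_right)
    _ ≤ massIn T V := massIn_mono (Set.union_subset Set.inter_subset_left Set.inter_subset_left)

theorem exists_isGδ_superset_normT_eq (A : Set Z) :
    ∃ B, IsGδ B ∧ A ⊆ B ∧ normT T B = normT T A := by
  choose V hV hAV hVA using fun n : ℕ =>
    exists_isOpen_massIn_le_normT_add (T := T) A (ENNReal.inv_ne_zero.2 (ENNReal.natCast_ne_top n))
  refine ⟨⋂ n, V n, .iInter_of_isOpen hV, Set.subset_iInter hAV, le_antisymm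
    (ENNReal.le_of_forall_pos_le_add fun ε hε _ => ?_) (normT_mono (Set.subset_iInter hAV))⟩
  obtain ⟨n, hn⟩ := ENNReal.exists_inv_nat_lt (ENNReal.coe_ne_zero.2 hε.ne')
  calc normT T (⋂ n, V n) ≤ massIn T (V n) := normT_le_massIn (hV n) (Set.iInter_subset V n)
    _ ≤ normT T A + (n : ℝ≥0∞)⁻¹ := hVA n
    _ ≤ normT T A + ε := by gcongr

end NormT

noncomputable def normTOuterMeasure {m : ℕ} (T : (Z → ℝ) → (Fin m → Z → ℝ) → ℝ)
    (hmul : IsMultilinearFunctional T)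
    (hcpt : HasCompactlyConcentratedMass T) :
    OuterMeasure Z where
  measureOf := normT T
  empty := normT_empty hmul
  mono := normT_mono
  iUnion_nat s _ := normT_iUnion_le hmul hcpt s

theorem normTOuterMeasure_isMetric {m : ℕ} {T : (Z → ℝ) → (Fin m → Z → ℝ) → ℝ}
    (hmul : IsMultilinearFunctional T)
    (hcpt : HasCompactlyConcentratedMass T) :
    (normTOuterMeasure T hmul hcpt).IsMetric := fun _ _ hst =>
  le_antisymm (measure_union_le _ _) (normT_add_normT_le_of_areSeparated hst)

/-- Proposition 2.3: if `T` is multilinear and its mass in bounded open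
sets is concentrated near compact sets, then `‖T‖` is a Borel regular outer measure. -/
theorem normT_isOuterMeasure {Z : Type*} [MetricSpace Z] [MeasurableSpace Z] [BorelSpace Z]
    {m : ℕ} (T : (Z → ℝ) → (Fin m → Z → ℝ) → ℝ)
    (hmul : IsMultilinearFunctional T)
    (hcpt : ∀ U : Set Z, IsOpen U → IsBounded U → ∀ ε : ℝ, 0 < ε →
      ∃ C : Set Z, IsCompact C ∧ C ⊆ U ∧ massIn T (U \ C) < ENNReal.ofReal ε) :
    ∃ μ : MeasureTheory.OuterMeasure Z,
      (∀ A : Set Z, μ A = normT T A) ∧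
      (∀ E : Set Z, MeasurableSet E → μ.IsCaratheodory E) ∧
      (∀ A : Set Z, ∃ B : Set Z, MeasurableSet B ∧ A ⊆ B ∧ μ B = μ A) := by
  refine ⟨normTOuterMeasure T hmul hcpt, fun _ => rfl, fun E hE => ?_, fun A => ?_⟩
  · rw [BorelSpace.measurable_eq (α := Z)] at hE
    exact (normTOuterMeasure_isMetric hmul hcpt).borel_le_caratheodory E hE
  · obtain ⟨B, hB, hAB, hBA⟩ := exists_isGδ_superset_normT_eq (T := T) A
    exact ⟨B, hB.measurableSet, hAB, hBA⟩
end

section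
/- Let T ∈ M_{m,loc}(Z) and let μ be a Borel measure on Z, finite on bounded sets, such that |T(f,π)| ≤ (∏_i Lip(π_i|_{spt f})) ∫|f| dμ for all (f,π) ∈ Lip_bs(Z) × Lip_loc(Z)^m. Then ‖T‖(B) ≤ μ(B) for every Borel set B, i.e., ‖T‖ is the minimal such measure. -/
/-!
For an open set `V`, every competitor in the supremum defining the mass of `T` in `V` is a
finite family `(fᵢ, πᵢ)` with `πᵢ` 1-Lipschitz and `∑ |fᵢ| ≤ 𝟙_V`, so the mass inequality for `μ`
bounds its value by `∑ ∫ |fᵢ| dμ ≤ μ V`. Hence `‖T‖(V) ≤ μ V` on open sets, and since `μ`,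
being finite on balls, is outer regular, taking the infimum over open `V ⊇ B` gives the claim.
-/

open Metric Filter MeasureTheory ENNReal Bornology Topology

variable {Z : Type*} [MetricSpace Z]

def IsMassDominatedBy [MeasurableSpace Z] {m : ℕ}
    (T : (Z → ℝ) → (Fin m → Z → ℝ) → ℝ) (μ : Measure Z) : Prop :=
  ∀ (f : Z → ℝ) (π : Fin m → Z → ℝ) (K : Fin m → NNReal),
    LipBS f → (∀ i, LipLoc (π i)) →
    (∀ i, LipschitzOnWith (K i) (π i) (tsupport f)) →
    ENNReal.ofReal |T f π| ≤ (∏ i, (K i : ℝ≥0∞)) * ∫⁻ z, ENNReal.ofReal |f z| ∂μ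

theorem LipBS.continuous {f : Z → ℝ} (hf : LipBS f) :
    Continuous f :=
  let ⟨_, hK⟩ := hf.1
  hK.continuous

theorem MeasureTheory.Measure.outerRegular_of_isBounded_lt_top {X : Type*} [PseudoMetricSpace X]
    [MeasurableSpace X] [BorelSpace X] (μ : Measure X)
    (hfin : ∀ s : Set X, IsBounded s → μ s < ⊤) : μ.OuterRegular := by
  rcases isEmpty_or_nonempty X with hX | ⟨⟨z₀⟩⟩
  · rw [μ.eq_zero_of_isEmpty]
    infer_instance
  · refine Measure.OuterRegular.of_restrict (s := fun n : ℕ => ball z₀ n) (fun n => ?_)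
      (fun _ => isOpen_ball) (iUnion_ball_nat z₀).superset
    have : IsFiniteMeasure (μ.restrict (ball z₀ n)) :=
      ⟨by simpa using hfin _ isBounded_ball⟩
    infer_instance

theorem sum_lintegral_abs_le_measure {α ι : Type*} [MeasurableSpace α] [Fintype ι]
    (μ : Measure α) {V : Set α} (hV : MeasurableSet V) {f : ι → α → ℝ}
    (hf : ∀ i, Measurable (f i)) (hsupp : ∀ i, Function.support (f i) ⊆ V)
    (hsum : ∀ z, ∑ i, |f i z| ≤ 1) :
    ∑ i, ∫⁻ z, ENNReal.ofReal |f i z| ∂μ ≤ μ V := by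
  have hpointwise : ∀ z, ∑ i, ENNReal.ofReal |f i z| ≤ V.indicator 1 z := by
    intro z
    by_cases hz : z ∈ V
    · rw [Set.indicator_of_mem hz, ← ENNReal.ofReal_sum_of_nonneg fun i _ => abs_nonneg _]
      exact ENNReal.ofReal_le_one.2 (hsum z)
    · have hzero : ∀ i, f i z = 0 := fun i => Function.notMem_support.1 fun h => hz (hsupp i h)
      simp [hzero]
  calc ∑ i, ∫⁻ z, ENNReal.ofReal |f i z| ∂μ
      = ∫⁻ z, ∑ i, ENNReal.ofReal |f i z| ∂μ :=
        (lintegral_finsetSum _ fun i _ => ENNReal.measurable_ofReal.comp (hf i).abs).symm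
    _ ≤ ∫⁻ z, V.indicator 1 z ∂μ := lintegral_mono hpointwise
    _ = μ V := lintegral_indicator_one hV

section MassInequality

variable [MeasurableSpace Z] {m : ℕ} {T : (Z → ℝ) → (Fin m → Z → ℝ) → ℝ} {μ : Measure Z}

theorem IsMassDominatedBy.ofReal_abs_le_lintegral (h : IsMassDominatedBy T μ) {f : Z → ℝ}
    {π : Fin m → Z → ℝ} (hf : LipBS f) (hπ : ∀ i, LipschitzWith 1 (π i)) :
    ENNReal.ofReal |T f π| ≤ ∫⁻ z, ENNReal.ofReal |f z| ∂μ := by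
  simpa using h f π (fun _ => 1) hf (fun i _ _ => ⟨1, (hπ i).lipschitzOnWith⟩)
    (fun i => (hπ i).lipschitzOnWith)

theorem IsMassDominatedBy.massIn_le [OpensMeasurableSpace Z] (h : IsMassDominatedBy T μ)
    {V : Set Z} (hV : MeasurableSet V) : massIn T V ≤ μ V := by
  refine iSup_le ?_
  rintro ⟨⟨n, q⟩, hq, hsum⟩
  calc ENNReal.ofReal (∑ i : Fin n, T (q i).1 (q i).2)
      ≤ ENNReal.ofReal (∑ i : Fin n, |T (q i).1 (q i).2|) :=
        ENNReal.ofReal_le_ofReal (Finset.sum_le_sum fun i _ => le_abs_self _)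
    _ = ∑ i : Fin n, ENNReal.ofReal |T (q i).1 (q i).2| :=
        ENNReal.ofReal_sum_of_nonneg fun i _ => abs_nonneg _
    _ ≤ ∑ i : Fin n, ∫⁻ z, ENNReal.ofReal |(q i).1 z| ∂μ :=
        Finset.sum_le_sum fun i _ => h.ofReal_abs_le_lintegral (hq i).1 (hq i).2.2
    _ ≤ μ V :=
        sum_lintegral_abs_le_measure μ hV (fun i => (hq i).1.continuous.measurable)
          (fun i => (subset_tsupport _).trans (hq i).2.1) hsum

theorem normT_le_of_massIn_le [OpensMeasurableSpace Z] [μ.OuterRegular]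
    (h : ∀ V, IsOpen V → massIn T V ≤ μ V) (A : Set Z) : normT T A ≤ μ A := by
  rw [Set.measure_eq_iInf_isOpen]
  refine le_iInf₂ fun U hAU => le_iInf fun hU => ?_
  exact (iInf₂_le U ⟨hU, hAU⟩).trans (h U hU)

end MassInequality

theorem normT_minimal_general {Z : Type*} [MetricSpace Z] [MeasurableSpace Z] [BorelSpace Z]
    {m : ℕ} (T : (Z → ℝ) → (Fin m → Z → ℝ) → ℝ)
    (μ : Measure Z) (hfin : ∀ s : Set Z, IsBounded s → μ s < ⊤)
    (hbound : ∀ (f : Z → ℝ) (π : Fin m → Z → ℝ) (K : Fin m → NNReal),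
      LipBS f → (∀ i, LipLoc (π i)) →
      (∀ i, LipschitzOnWith (K i) (π i) (tsupport f)) →
      ENNReal.ofReal |T f π| ≤ (∏ i, (K i : ℝ≥0∞)) * ∫⁻ z, ENNReal.ofReal |f z| ∂μ) :
    ∀ B : Set Z, MeasurableSet B → normT T B ≤ μ B := by
  have hdom : IsMassDominatedBy T μ := hbound
  have := Measure.outerRegular_of_isBounded_lt_top μ hfin
  exact fun B _ => normT_le_of_massIn_le (fun V hV => hdom.massIn_le hV.measurableSet) B

/-- Proposition 2.5, second part: `‖T‖` is minimal among Borel measures,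
finite on bounded sets, satisfying the integral mass inequality. -/
theorem normT_minimal {Z : Type*} [MetricSpace Z] [MeasurableSpace Z] [BorelSpace Z]
    {m : ℕ} (T : (Z → ℝ) → (Fin m → Z → ℝ) → ℝ)
    (hT : IsMetricFunctional T) (hTloc : MlocCond T)
    (μ : Measure Z) (hfin : ∀ s : Set Z, IsBounded s → μ s < ⊤)
    (hbound : ∀ (f : Z → ℝ) (π : Fin m → Z → ℝ) (K : Fin m → NNReal),
      LipBS f → (∀ i, LipLoc (π i)) →
      (∀ i, LipschitzOnWith (K i) (π i) (tsupport f)) →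
      ENNReal.ofReal |T f π| ≤ (∏ i, (K i : ℝ≥0∞)) * ∫⁻ z, ENNReal.ofReal |f z| ∂μ) :
    ∀ B : Set Z, MeasurableSet B → normT T B ≤ μ B :=
  normT_minimal_general T μ hfin hbound
end
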